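/- arXiv:2601.18332 — 2 statements merged into one kernel-verified Lean document; each statement's English description precedes it below -/
import Mathlib

section
/- Let u_n be the normalized Maclaurin coefficients of e^{pz}·J_ν(z), i.e. u_n = Γ(ν+1) times the n-th Maclaurin coefficient of z ↦ e^{pz}·g_ν(z). Then u_0 = 1, u_1 = p, and for every natural number n ≥ 1, u_{n+1} = (p(2ν+2n+1)/((n+1)(2ν+n+1)))·u_n − ((p²+1)/((n+1)(2ν+n+1)))·u_{n−1}. -/
open Complex

/-- The entire part of the Bessel function of the first kind:
`J_ν(z) = (z/2)^ν * besselSeries ν z`. -/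
noncomputable def besselSeries (ν : ℂ) (z : ℂ) : ℂ :=
  ∑' k : ℕ, (-1) ^ k * z ^ (2 * k) / (4 ^ k * (Nat.factorial k : ℂ) * Complex.Gamma (ν + (k : ℂ) + 1))

/-- The normalized `n`-th Maclaurin coefficient of `h(z) * J_ν(z)`:
`Γ(ν+1)` times the `n`-th Maclaurin coefficient of `z ↦ h z * besselSeries ν z`. -/
noncomputable def normCoeff (ν : ℂ) (h : ℂ → ℂ) (n : ℕ) : ℂ :=
  Complex.Gamma (ν + 1) *
    (iteratedDeriv n (fun z => h z * besselSeries ν z) 0 / (Nat.factorial n : ℂ))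

/-!
Write `B = ∑ aₖ X^{2k}` for the Maclaurin series of `g_ν` and `F = e^{pX} B` for that of
`e^{pz} g_ν(z)`. The recurrence `aₖ = -4(k+1)(ν+k+1) aₖ₊₁` says that `B` solves
`X B'' + (2ν+1) B' + X B = 0`; conjugating by the exponential (`(e^{pX})' = p e^{pX}`) turns this
into `X F'' + (2ν+1-2pX) F' + ((p²+1)X - (2ν+1)p) F = 0`, whose coefficient of `X^{n}` is the
three-term recurrence. The computation happens in `ℂ⟦X⟧`; analysis only identifies the Maclaurin
coefficients of the entire function `e^{pz} g_ν(z)` with the coefficients of the Cauchy product `F`.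
-/

open PowerSeries Filter Topology
open FormalMultilinearSeries
  (ofScalars ofScalars_norm ofScalars_apply_eq ofScalars_series_injective)
open scoped Nat

section Analytic

variable {𝕜 : Type*} [NontriviallyNormedField 𝕜] {c : ℕ → 𝕜} {f : 𝕜 → 𝕜}

theorem hasFPowerSeriesAt_ofScalars_of_forall_hasSum
    (hf : ∀ z, HasSum (fun n => c n * z ^ n) (f z)) :
    HasFPowerSeriesAt f (ofScalars 𝕜 c) 0 := by
  refine ⟨1, ⟨?_, one_pos, fun {y} _ => ?_⟩⟩
  · refine (ofScalars 𝕜 c).le_radius_of_tendsto (l := 0) ?_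
    simpa [ofScalars_norm] using (hf 1).summable.tendsto_atTop_zero.norm
  · simpa [ofScalars_apply_eq, mul_comm] using hf y

theorem HasFPowerSeriesAt.iteratedDeriv_div_factorial [CompleteSpace 𝕜] [CharZero 𝕜] {x : 𝕜}
    (hf : HasFPowerSeriesAt f (ofScalars 𝕜 c) x) (n : ℕ) :
    iteratedDeriv n f x / n ! = c n :=
  congrFun (ofScalars_series_injective 𝕜 𝕜
    (hf.analyticAt.hasFPowerSeriesAt.eq_formalMultilinearSeries hf)) n

end Analytic

open Finset in
theorem hasSum_coeff_mul_mul_pow {R : Type*} [NormedCommRing R] [CompleteSpace R]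
    {f g : R⟦X⟧} {z a b : R}
    (hf : HasSum (fun n => coeff n f * z ^ n) a) (hf' : Summable fun n => ‖coeff n f * z ^ n‖)
    (hg : HasSum (fun n => coeff n g * z ^ n) b) (hg' : Summable fun n => ‖coeff n g * z ^ n‖) :
    HasSum (fun n => coeff n (f * g) * z ^ n) (a * b) := by
  have hterm : ∀ n, ∑ kl ∈ antidiagonal n,
      coeff kl.1 f * z ^ kl.1 * (coeff kl.2 g * z ^ kl.2) = coeff n (f * g) * z ^ n := by
    intro n
    rw [coeff_mul, Finset.sum_mul]
    refine Finset.sum_congr rfl fun kl hkl => ?_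
    rw [← mem_antidiagonal.1 hkl, pow_add]
    ring
  have h := (summable_norm_sum_mul_antidiagonal_of_summable_norm hf' hg').of_norm.hasSum
  rw [← tsum_mul_tsum_eq_tsum_sum_antidiagonal_of_summable_norm hf' hg', hf.tsum_eq,
    hg.tsum_eq] at h
  simpa only [hterm] using h

theorem summable_norm_mul_pow_of_norm_eq_mul_norm_succ {E : Type*} [SeminormedAddCommGroup E]
    {a : ℕ → E} {q : ℕ → ℝ} (ha : ∀ k, ‖a k‖ = q k * ‖a (k + 1)‖) (hq : Tendsto q atTop atTop)
    (r : ℝ) : Summable fun k => ‖a k‖ * r ^ k := by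
  refine summable_of_ratio_norm_eventually_le (r := 1 / 2) (by norm_num) ?_
  filter_upwards [hq.eventually_ge_atTop (2 * |r|)] with k hk
  have hk' := mul_le_mul_of_nonneg_left hk (by positivity : 0 ≤ ‖a (k + 1)‖ * |r| ^ k)
  have hq₀ : 0 ≤ q k := (by positivity : (0 : ℝ) ≤ 2 * |r|).trans hk
  simp only [norm_mul, norm_pow, Real.norm_eq_abs, abs_norm, ha k, pow_succ, abs_of_nonneg hq₀]
  linarith

noncomputable def besselCoeff (ν : ℂ) (k : ℕ) : ℂ :=
  (-1) ^ k / (4 ^ k * k ! * Gamma (ν + k + 1))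

-- Valid for every `ν`: Mathlib's `Γ` is `0` at its poles, where `(Γ s)⁻¹ = s (Γ (s + 1))⁻¹`
-- still holds.
theorem besselCoeff_eq_mul_succ (ν : ℂ) (k : ℕ) :
    besselCoeff ν k = -(4 * (k + 1) * (ν + k + 1)) * besselCoeff ν (k + 1) := by
  have h := one_div_Gamma_eq_self_mul_one_div_Gamma_add_one (ν + k + 1)
  simp only [besselCoeff, div_eq_mul_inv, mul_inv, Nat.factorial_succ, pow_succ] at h ⊢
  push_cast
  rw [h, show ν + ((k : ℂ) + 1) + 1 = ν + k + 1 + 1 by ring]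
  have : (k + 1 : ℂ) ≠ 0 := k.cast_add_one_ne_zero
  field_simp

theorem tendsto_norm_natCast_add_atTop (ν : ℂ) :
    Tendsto (fun k : ℕ => ‖ν + k‖) atTop atTop := by
  refine tendsto_atTop_mono (fun k => ?_) (tendsto_atTop_add_const_right _ (-‖ν‖)
    tendsto_natCast_atTop_atTop)
  have := norm_sub_le (ν + k) ν
  simp only [add_sub_cancel_left, Complex.norm_natCast] at this
  linarith

theorem summable_norm_besselCoeff_mul_pow (ν : ℂ) (r : ℝ) :
    Summable fun k => ‖besselCoeff ν k‖ * r ^ k := by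
  refine summable_norm_mul_pow_of_norm_eq_mul_norm_succ (q := fun k => ‖4 * (k + 1) * (ν + k + 1)‖)
    (fun k => by rw [besselCoeff_eq_mul_succ ν k, norm_mul, norm_neg]) ?_ r
  refine tendsto_atTop_mono (fun k => ?_) (tendsto_norm_natCast_add_atTop (ν + 1))
  have h4 : (1 : ℝ) ≤ ‖4 * ((k : ℂ) + 1)‖ := by
    rw [show 4 * ((k : ℂ) + 1) = ((4 * (k + 1) : ℕ) : ℂ) by push_cast; ring, Complex.norm_natCast]
    exact_mod_cast Nat.one_le_iff_ne_zero.2 (by positivity)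
  rw [norm_mul, add_right_comm]
  exact le_mul_of_one_le_left (norm_nonneg _) h4

noncomputable def besselPowerSeries (ν : ℂ) : ℂ⟦X⟧ :=
  mk fun n => if Even n then besselCoeff ν (n / 2) else 0

theorem coeff_besselPowerSeries_two_mul (ν : ℂ) (k : ℕ) :
    coeff (2 * k) (besselPowerSeries ν) = besselCoeff ν k := by
  simp [besselPowerSeries]

theorem coeff_besselPowerSeries_two_mul_add_one (ν : ℂ) (k : ℕ) :
    coeff (2 * k + 1) (besselPowerSeries ν) = 0 := by
  simp [besselPowerSeries]

theorem coeff_besselPowerSeries_eq_mul_add_two (ν : ℂ) (n : ℕ) :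
    coeff n (besselPowerSeries ν) =
      -((n + 2) * (2 * ν + n + 2)) * coeff (n + 2) (besselPowerSeries ν) := by
  obtain ⟨k, rfl | rfl⟩ := Nat.even_or_odd' n
  · rw [show 2 * k + 2 = 2 * (k + 1) by ring, coeff_besselPowerSeries_two_mul,
      coeff_besselPowerSeries_two_mul, besselCoeff_eq_mul_succ]
    push_cast
    ring
  · rw [show 2 * k + 1 + 2 = 2 * (k + 1) + 1 by ring, coeff_besselPowerSeries_two_mul_add_one,
      coeff_besselPowerSeries_two_mul_add_one, mul_zero]

theorem besselPowerSeries_ode (ν : ℂ) :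
    X * d⁄dX ℂ (d⁄dX ℂ (besselPowerSeries ν)) + C (2 * ν + 1) * d⁄dX ℂ (besselPowerSeries ν) +
      X * besselPowerSeries ν = 0 := by
  ext (_ | m) <;> rw [map_add, map_add, coeff_C_mul, coeff_derivative, map_zero]
  · simp [show coeff 1 (besselPowerSeries ν) = 0 from coeff_besselPowerSeries_two_mul_add_one ν 0]
  · rw [coeff_succ_X_mul, coeff_succ_X_mul, coeff_derivative, coeff_derivative,
      coeff_besselPowerSeries_eq_mul_add_two ν m]
    push_cast
    ring

theorem summable_norm_besselCoeff_mul_pow_two_mul (ν z : ℂ) :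
    Summable fun k => ‖besselCoeff ν k * z ^ (2 * k)‖ := by
  refine (summable_norm_besselCoeff_mul_pow ν (‖z‖ ^ 2)).congr fun k => ?_
  rw [norm_mul, norm_pow, pow_mul]

theorem hasSum_coeff_besselPowerSeries_mul_pow (ν z : ℂ) :
    HasSum (fun n => coeff n (besselPowerSeries ν) * z ^ n) (besselSeries ν z) := by
  have he : HasSum (fun k => coeff (2 * k) (besselPowerSeries ν) * z ^ (2 * k))
      (besselSeries ν z) := by
    have h : besselSeries ν z = ∑' k, besselCoeff ν k * z ^ (2 * k) := by
      unfold besselSeries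
      exact tsum_congr fun k => by simp only [besselCoeff]; ring
    simpa only [coeff_besselPowerSeries_two_mul, h] using
      (summable_norm_besselCoeff_mul_pow_two_mul ν z).of_norm.hasSum
  have ho : HasSum (fun k => coeff (2 * k + 1) (besselPowerSeries ν) * z ^ (2 * k + 1)) 0 := by
    simpa only [coeff_besselPowerSeries_two_mul_add_one, zero_mul] using hasSum_zero
  simpa only [add_zero] using
    HasSum.even_add_odd (f := fun n => coeff n (besselPowerSeries ν) * z ^ n) he ho

theorem summable_norm_coeff_besselPowerSeries_mul_pow (ν z : ℂ) :
    Summable fun n => ‖coeff n (besselPowerSeries ν) * z ^ n‖ :=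
  .even_add_odd (f := fun n => ‖coeff n (besselPowerSeries ν) * z ^ n‖)
    (by simpa only [coeff_besselPowerSeries_two_mul] using
      summable_norm_besselCoeff_mul_pow_two_mul ν z)
    (by simp [coeff_besselPowerSeries_two_mul_add_one])

theorem derivative_rescale {R : Type*} [CommSemiring R] (f : R⟦X⟧) (a : R) :
    d⁄dX R (rescale a f) = C a * rescale a (d⁄dX R f) := by
  ext n
  simp only [coeff_derivative, coeff_rescale, coeff_C_mul, pow_succ]
  ring

theorem derivative_rescale_exp (p : ℂ) :
    d⁄dX ℂ (rescale p (exp ℂ)) = C p * rescale p (exp ℂ) := by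
  rw [derivative_rescale, derivative_exp]

theorem coeff_rescale_exp_mul_pow (p z : ℂ) (n : ℕ) :
    coeff n (rescale p (exp ℂ)) * z ^ n = (p * z) ^ n / n ! := by
  simp only [coeff_rescale, coeff_exp, one_div, map_inv₀, map_natCast, mul_pow]
  ring

theorem hasSum_coeff_rescale_exp_mul_pow (p z : ℂ) :
    HasSum (fun n => coeff n (rescale p (exp ℂ)) * z ^ n) (Complex.exp (p * z)) := by
  simpa only [coeff_rescale_exp_mul_pow, ← Complex.exp_eq_exp_ℂ] using
    NormedSpace.expSeries_div_hasSum_exp (p * z)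

theorem summable_norm_coeff_rescale_exp_mul_pow (p z : ℂ) :
    Summable fun n => ‖coeff n (rescale p (exp ℂ)) * z ^ n‖ := by
  simpa only [coeff_rescale_exp_mul_pow] using NormedSpace.norm_expSeries_div_summable (p * z)

theorem ode_mul_of_derivative_eq_C_mul {R : Type*} [CommRing R] {E B : R⟦X⟧} {p s : R}
    (hE : d⁄dX R E = C p * E)
    (hB : X * d⁄dX R (d⁄dX R B) + C s * d⁄dX R B + X * B = 0) :
    X * d⁄dX R (d⁄dX R (E * B)) + C s * d⁄dX R (E * B) - C (2 * p) * (X * d⁄dX R (E * B)) +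
      C (p ^ 2 + 1) * (X * (E * B)) - C (s * p) * (E * B) = 0 := by
  simp only [Derivation.leibniz, smul_eq_mul, hE, derivative_C, map_mul, map_add, map_pow,
    map_one, map_ofNat, mul_zero, add_zero]
  linear_combination E * hB

theorem coeff_recurrence_of_ode {R : Type*} [CommRing R] {F : R⟦X⟧} {p s : R}
    (h : X * d⁄dX R (d⁄dX R F) + C s * d⁄dX R F - C (2 * p) * (X * d⁄dX R F) +
      C (p ^ 2 + 1) * (X * F) - C (s * p) * F = 0) (m : ℕ) :
    (m + 2) * (m + 1 + s) * coeff (m + 2) F =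
      p * (2 * m + 2 + s) * coeff (m + 1) F - (p ^ 2 + 1) * coeff m F := by
  have hm := congrArg (coeff (m + 1)) h
  simp only [map_add, map_sub, add_mul, coeff_succ_X_mul, coeff_C_mul, coeff_derivative,
    map_zero] at hm
  push_cast at hm
  linear_combination hm

theorem normCoeff_exp_eq_Gamma_mul_coeff (ν p : ℂ) (n : ℕ) :
    normCoeff ν (fun z => Complex.exp (p * z)) n =
      Gamma (ν + 1) * coeff n (rescale p (exp ℂ) * besselPowerSeries ν) := by
  have hsum (z : ℂ) : HasSum (fun n => coeff n (rescale p (exp ℂ) * besselPowerSeries ν) * z ^ n)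
      (Complex.exp (p * z) * besselSeries ν z) :=
    hasSum_coeff_mul_mul_pow (hasSum_coeff_rescale_exp_mul_pow p z)
      (summable_norm_coeff_rescale_exp_mul_pow p z) (hasSum_coeff_besselPowerSeries_mul_pow ν z)
      (summable_norm_coeff_besselPowerSeries_mul_pow ν z)
  rw [normCoeff, (hasFPowerSeriesAt_ofScalars_of_forall_hasSum hsum).iteratedDeriv_div_factorial]

theorem coeff_zero_rescale_exp_mul_besselPowerSeries (ν p : ℂ) :
    coeff 0 (rescale p (exp ℂ) * besselPowerSeries ν) = (Gamma (ν + 1))⁻¹ := by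
  simp [coeff_mul, coeff_rescale, coeff_exp, besselPowerSeries, besselCoeff]

theorem coeff_one_rescale_exp_mul_besselPowerSeries (ν p : ℂ) :
    coeff 1 (rescale p (exp ℂ) * besselPowerSeries ν) = p * (Gamma (ν + 1))⁻¹ := by
  simp [coeff_mul, Finset.Nat.antidiagonal_succ, coeff_rescale, coeff_exp, besselPowerSeries,
    besselCoeff]

theorem exp_besselJ_coeff_recurrence (ν p : ℂ) (hν : ∀ n : ℕ, 2 * ν + (n : ℂ) + 1 ≠ 0)
    (u : ℕ → ℂ) (hu : ∀ n, u n = normCoeff ν (fun z => Complex.exp (p * z)) n) :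
    u 0 = 1 ∧ u 1 = p ∧ (∀ n : ℕ, 1 ≤ n →
      u (n + 1) = (p * (2 * ν + 2 * ((n : ℂ)) + 1) / ((((n : ℂ)) + 1) * (2 * ν + ((n : ℂ)) + 1))) * u n + (-((p ^ 2 + 1) / ((((n : ℂ)) + 1) * (2 * ν + ((n : ℂ)) + 1)))) * u (n - 1)) := by
  simp only [hu, normCoeff_exp_eq_Gamma_mul_coeff]
  have hΓ : Gamma (ν + 1) ≠ 0 :=
    Gamma_ne_zero fun m h => hν (2 * m + 1) (by push_cast; linear_combination 2 * h)
  refine ⟨?_, ?_, fun n hn => ?_⟩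
  · rw [coeff_zero_rescale_exp_mul_besselPowerSeries, mul_inv_cancel₀ hΓ]
  · rw [coeff_one_rescale_exp_mul_besselPowerSeries, mul_left_comm, mul_inv_cancel₀ hΓ, mul_one]
  obtain ⟨m, rfl⟩ := Nat.exists_eq_add_of_le' hn
  have hrec := coeff_recurrence_of_ode
    (ode_mul_of_derivative_eq_C_mul (derivative_rescale_exp p) (besselPowerSeries_ode ν)) m
  have hD : ((m + 1 : ℕ) + 1) * (2 * ν + (m + 1 : ℕ) + 1) ≠ 0 :=
    mul_ne_zero (Nat.cast_add_one_ne_zero _) (hν (m + 1))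
  rw [Nat.add_sub_cancel, show m + 1 + 1 = m + 2 from rfl, div_mul_eq_mul_div, neg_mul,
    div_mul_eq_mul_div, ← neg_div, ← add_div, eq_div_iff hD]
  push_cast
  linear_combination Gamma (ν + 1) * hrec
end

section
/- Let u_n and v_n be the normalized Maclaurin coefficients of e^{pz}·J_ν(z) and of e^{−pz}·J_ν(z) respectively. Then the n-th normalized Maclaurin coefficient of cosh(pz)·J_ν(z) equals (u_n + v_n)/2 for every n ≥ 0; moreover u_0 = 1, u_1 = p, v_0 = 1, v_1 = −p, and for every n ≥ 1: u_{n+1} = (p(2ν+2n+1)/((n+1)(2ν+n+1)))·u_n − ((p²+1)/((n+1)(2ν+n+1)))·u_{n−1} and v_{n+1} = −(p(2ν+2n+1)/((n+1)(2ν+n+1)))·v_n − ((p²+1)/((n+1)(2ν+n+1)))·v_{n−1}. -/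
open Complex

open Finset Filter

set_option linter.unusedSectionVars false

noncomputable def bb (ν : ℂ) (k : ℕ) : ℂ :=
  (-1) ^ k / (4 ^ k * (Nat.factorial k : ℂ) * Complex.Gamma (ν + (k : ℂ) + 1))

noncomputable def ee (q : ℂ) (m : ℕ) : ℂ := q ^ m / (Nat.factorial m : ℂ)

noncomputable def bc (ν : ℂ) (j : ℕ) : ℂ := if Even j then bb ν (j / 2) else 0

private lemma coeff_unique (c : ℕ → ℂ) (f : ℂ → ℂ)
    (hs : ∀ z : ℂ, Summable fun n => ‖c n * z ^ n‖)
    (hf : ∀ z : ℂ, f z = ∑' n, c n * z ^ n) (n : ℕ) :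
    iteratedDeriv n f 0 = (n.factorial : ℂ) * c n := by
  have hball : HasFPowerSeriesOnBall f (FormalMultilinearSeries.ofScalars ℂ c) 0 ⊤ := by
    refine ⟨le_of_eq ?_, ENNReal.zero_lt_top, ?_⟩
    · refine (FormalMultilinearSeries.radius_eq_top_of_summable_norm _ fun r => ?_).symm
      refine Summable.of_nonneg_of_le (fun k => by positivity) (fun k => ?_) (hs (r : ℂ))
      rw [norm_mul, norm_pow, FormalMultilinearSeries.ofScalars]
      rw [norm_smul (c k) (ContinuousMultilinearMap.mkPiAlgebraFin ℂ k ℂ),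
        ContinuousMultilinearMap.norm_mkPiAlgebraFin, mul_one]
      simp
    · intro y _
      have : (fun k => FormalMultilinearSeries.ofScalars ℂ c k fun _ => y)
          = fun k => c k * y ^ k := by
        ext k
        rw [FormalMultilinearSeries.ofScalars_apply_eq, smul_eq_mul]
      rw [this, zero_add, hf y]
      exact ((hs y).of_norm).hasSum
  have h1 := hball.factorial_smul 1 n
  rw [iteratedDeriv_eq_iteratedFDeriv, ← h1, FormalMultilinearSeries.ofScalars_apply_eq,
    one_pow, smul_eq_mul, mul_one, nsmul_eq_mul]

section gamma
variable {ν : ℂ} (hν : ∀ n : ℕ, 2 * ν + (n : ℂ) + 1 ≠ 0)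
include hν

lemma shift_ne (k : ℕ) : ν + (k : ℂ) + 1 ≠ 0 := by
  intro h
  exact hν (2 * k + 1) (by push_cast; linear_combination 2 * h)

lemma gamma_ne (k : ℕ) : Complex.Gamma (ν + (k : ℂ) + 1) ≠ 0 := by
  refine Complex.Gamma_ne_zero fun m hm => ?_
  exact hν (2 * (k + m) + 1) (by push_cast; linear_combination 2 * hm)

lemma bb_ne (k : ℕ) : bb ν k ≠ 0 := by
  unfold bb
  apply div_ne_zero (pow_ne_zero _ (by norm_num))
  exact mul_ne_zero (mul_ne_zero (pow_ne_zero _ (by norm_num))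
    (Nat.cast_ne_zero.mpr (Nat.factorial_ne_zero k))) (gamma_ne hν k)

lemma bb_succ (k : ℕ) : bb ν k = -(4 * ((k : ℂ) + 1) * (ν + k + 1)) * bb ν (k + 1) := by
  unfold bb
  have hg : Complex.Gamma (ν + ((k : ℂ) + 1) + 1) = (ν + k + 1) * Complex.Gamma (ν + k + 1) := by
    rw [show ν + ((k : ℂ) + 1) + 1 = (ν + k + 1) + 1 by ring,
      Complex.Gamma_add_one _ (shift_ne hν k)]
  push_cast
  rw [hg, Nat.factorial_succ]
  have h1 := gamma_ne hν k
  have h2 : ((Nat.factorial k : ℂ)) ≠ 0 := Nat.cast_ne_zero.mpr (Nat.factorial_ne_zero k)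
  have h3 := shift_ne hν k
  have h4 : ((k : ℂ) + 1) ≠ 0 := Nat.cast_add_one_ne_zero k
  have h5 : (4 : ℂ) ^ k ≠ 0 := pow_ne_zero _ (by norm_num)
  push_cast
  field_simp
  ring

lemma bb_summable (z : ℂ) : Summable fun k => ‖bb ν k * z ^ (2 * k)‖ := by
  rcases eq_or_ne z 0 with rfl | hz
  · apply summable_of_ne_finset_zero (s := {0})
    intro k hk
    simp only [Finset.mem_singleton] at hk
    simp [zero_pow, Nat.mul_ne_zero (two_ne_zero) hk]
  · apply summable_of_ratio_test_tendsto_lt_one (l := 0) one_pos ?_ ?_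
    · filter_upwards with k
      exact norm_ne_zero_iff.mpr (mul_ne_zero (bb_ne hν k) (pow_ne_zero _ hz))
    · have hrat : (fun k : ℕ => ‖‖bb ν (k + 1) * z ^ (2 * (k + 1))‖‖ / ‖‖bb ν k * z ^ (2 * k)‖‖)
          = fun k : ℕ => ‖z‖ ^ 2 / (4 * ((k : ℝ) + 1) * ‖ν + (k : ℂ) + 1‖) := by
        funext k
        have h1 : ‖bb ν (k + 1)‖ ≠ 0 := norm_ne_zero_iff.mpr (bb_ne hν (k + 1))
        have h2 : (0:ℝ) < ‖z‖ := norm_pos_iff.mpr hz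
        have h3 : ‖ν + (k : ℂ) + 1‖ ≠ 0 := norm_ne_zero_iff.mpr (shift_ne hν k)
        have h4 : ‖(4 : ℂ) * ((k : ℂ) + 1)‖ = 4 * ((k : ℝ) + 1) := by
          rw [show (4 : ℂ) * ((k : ℂ) + 1) = ((4 * (k + 1) : ℕ) : ℂ) by push_cast; ring,
            Complex.norm_natCast]
          push_cast; ring
        have hbk : ‖bb ν k‖ = 4 * ((k : ℝ) + 1) * ‖ν + (k : ℂ) + 1‖ * ‖bb ν (k + 1)‖ := by
          rw [bb_succ hν k, norm_mul, norm_neg, norm_mul, h4]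
        have h5 : (0:ℝ) < 4 * ((k : ℝ) + 1) := by positivity
        have h6 : (0:ℝ) < ‖ν + (k : ℂ) + 1‖ := lt_of_le_of_ne (norm_nonneg _) (Ne.symm h3)
        have h7 : (0:ℝ) < ‖bb ν (k + 1)‖ := lt_of_le_of_ne (norm_nonneg _) (Ne.symm h1)
        rw [norm_norm, norm_norm, norm_mul, norm_mul, hbk,
          show 2 * (k + 1) = 2 * k + 2 by ring, pow_add, norm_mul, norm_pow, norm_pow]
        rw [div_eq_div_iff (by positivity) (by positivity)]
        ring
      rw [hrat]
      apply Tendsto.div_atTop (tendsto_const_nhds)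
      apply tendsto_atTop_mono (fun k : ℕ => ?_)
        (tendsto_atTop_add_const_right atTop (1 - ‖ν‖) tendsto_natCast_atTop_atTop)
      have hge : (k : ℝ) + 1 - ‖ν‖ ≤ ‖ν + (k : ℂ) + 1‖ := by
        have : ‖((k : ℂ) + 1)‖ - ‖ν‖ ≤ ‖ν + ((k : ℂ) + 1)‖ := by
          have h := norm_sub_le (ν + ((k : ℂ) + 1)) ν
          rw [add_sub_cancel_left] at h
          linarith
        have hk1 : ‖((k : ℂ) + 1)‖ = (k : ℝ) + 1 := by
          rw [show ((k : ℂ) + 1) = ((k + 1 : ℕ) : ℂ) by push_cast; ring, Complex.norm_natCast]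
          push_cast; ring
        rw [hk1] at this
        convert this using 2
        ring
      calc (k : ℝ) + (1 - ‖ν‖) = 1 * ((k : ℝ) + 1 - ‖ν‖) := by ring
        _ ≤ 4 * ((k : ℝ) + 1) * ‖ν + (k : ℂ) + 1‖ := by
            rcases le_or_gt ((k : ℝ) + 1 - ‖ν‖) 0 with h | h
            · calc 1 * ((k:ℝ) + 1 - ‖ν‖) ≤ 0 := by linarith
                _ ≤ _ := by positivity
            · apply mul_le_mul ?_ hge h.le (by positivity)
              have : (0:ℝ) ≤ (k : ℝ) := Nat.cast_nonneg k
              linarith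

end gamma


lemma ee_summable (q z : ℂ) : Summable fun m => ‖ee q m * z ^ m‖ := by
  refine Summable.congr (Real.summable_pow_div_factorial ‖q * z‖) fun m => ?_
  unfold ee
  simp only [norm_mul, norm_div, norm_pow, Complex.norm_natCast, mul_pow]
  ring

lemma exp_tsum (q z : ℂ) : Complex.exp (q * z) = ∑' m, ee q m * z ^ m := by
  rw [Complex.exp_eq_exp_ℂ, NormedSpace.exp_eq_tsum_div]
  refine tsum_congr fun m => ?_
  unfold ee
  rw [mul_pow]
  ring

section prod
variable {ν : ℂ} (hν : ∀ n : ℕ, 2 * ν + (n : ℂ) + 1 ≠ 0)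
include hν

lemma two_mul_inj : Function.Injective (fun k : ℕ => 2 * k) := fun a b h => by
  simp only [] at h; omega

lemma bc_support {g : ℕ → ℂ} (hg : ∀ j, ¬ Even j → g j = 0) :
    Function.support g ⊆ Set.range (fun k : ℕ => 2 * k) := by
  intro j hj
  rcases Nat.even_or_odd j with ⟨r, hr⟩ | ho
  · exact ⟨r, by simp only []; omega⟩
  · exact absurd (hg j (Nat.not_even_iff_odd.mpr ho)) hj

lemma bc_two_mul (k : ℕ) : bc ν (2 * k) = bb ν k := by
  simp [bc, Nat.mul_div_cancel_left _ (two_pos)]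

lemma bc_odd {j : ℕ} (hj : ¬ Even j) : bc ν j = 0 := by simp [bc, hj]

lemma bc_summable (z : ℂ) : Summable fun j => ‖bc ν j * z ^ j‖ := by
  rw [← Function.Injective.summable_iff (two_mul_inj hν)]
  · refine Summable.congr (bb_summable hν z) fun k => ?_
    simp [Function.comp, bc_two_mul hν]
  · intro j hj
    rcases Nat.even_or_odd j with ⟨r, hr⟩ | ho
    · exact absurd ⟨r, by simp only []; omega⟩ hj
    · rw [bc_odd hν (Nat.not_even_iff_odd.mpr ho), zero_mul, norm_zero]

lemma bessel_tsum (z : ℂ) : besselSeries ν z = ∑' j, bc ν j * z ^ j := by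
  unfold besselSeries
  rw [← Function.Injective.tsum_eq (two_mul_inj hν)
    (f := fun j => bc ν j * z ^ j) (bc_support hν fun j hj => by rw [bc_odd hν hj, zero_mul])]
  refine tsum_congr fun k => ?_
  rw [bc_two_mul hν]
  unfold bb
  ring

lemma prod_coeff (h : ℂ → ℂ) (a : ℕ → ℂ)
    (hasum : ∀ z : ℂ, Summable fun m => ‖a m * z ^ m‖)
    (hh : ∀ z : ℂ, h z = ∑' m, a m * z ^ m) (n : ℕ) :
    normCoeff ν h n = Complex.Gamma (ν + 1) *
      ∑ k ∈ Finset.range (n + 1), bc ν k * a (n - k) := by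
  have key : iteratedDeriv n (fun z => h z * besselSeries ν z) 0
      = (n.factorial : ℂ) * ∑ k ∈ Finset.range (n + 1), bc ν k * a (n - k) := by
    apply coeff_unique
    · intro z
      refine Summable.congr
        (summable_norm_sum_mul_range_of_summable_norm (bc_summable hν z) (hasum z)) fun m => ?_
      congr 1
      rw [Finset.sum_mul]
      refine Finset.sum_congr rfl fun k hk => ?_
      rw [Finset.mem_range] at hk
      rw [show z ^ m = z ^ k * z ^ (m - k) by rw [← pow_add]; congr 1; omega]
      ring
    · intro z
      rw [hh z, bessel_tsum hν z, mul_comm,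
        tsum_mul_tsum_eq_tsum_sum_range_of_summable_norm (bc_summable hν z) (hasum z)]
      refine tsum_congr fun m => ?_
      rw [Finset.sum_mul]
      refine Finset.sum_congr rfl fun k hk => ?_
      rw [Finset.mem_range] at hk
      rw [show z ^ m = z ^ k * z ^ (m - k) by rw [← pow_add]; congr 1; omega]
      ring
  rw [normCoeff, key]
  have : ((n.factorial : ℂ)) ≠ 0 := Nat.cast_ne_zero.mpr (Nat.factorial_ne_zero n)
  field_simp

end prod

noncomputable def TT (ν q : ℂ) (n k : ℕ) : ℂ :=
  if 2 * k ≤ n then ee q (n - 2 * k) * bb ν k else 0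

noncomputable def cA (ν q : ℂ) (n : ℕ) : ℂ := ∑ k ∈ Finset.range (n + 1), TT ν q n k

lemma TT_of_le {ν q : ℂ} {n k : ℕ} (h : 2 * k ≤ n) : TT ν q n k = ee q (n - 2 * k) * bb ν k :=
  if_pos h

lemma TT_of_gt {ν q : ℂ} {n k : ℕ} (h : n < 2 * k) : TT ν q n k = 0 :=
  if_neg (by omega)

lemma sum_if_even (G : ℕ → ℂ) (K : ℕ) :
    ∑ k ∈ Finset.range (2 * K), (if Even k then G (k / 2) else 0) = ∑ j ∈ Finset.range K, G j := by
  induction K with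
  | zero => simp
  | succ K ih =>
    rw [show 2 * (K + 1) = 2 * K + 1 + 1 by ring, Finset.sum_range_succ, Finset.sum_range_succ,
      Finset.sum_range_succ, ih]
    have h1 : ¬ Even (2 * K + 1) := by simp [Nat.even_add_one]
    have h2 : Even (2 * K) := even_two_mul K
    simp [h1, h2, Nat.mul_div_cancel_left]

lemma bc_mul_sum (ν q : ℂ) (n : ℕ) :
    ∑ k ∈ Finset.range (n + 1), bc ν k * ee q (n - k)
      = ∑ j ∈ Finset.range (n / 2 + 1), bb ν j * ee q (n - 2 * j) := by
  have hsub : Finset.range (n + 1) ⊆ Finset.range (2 * (n / 2 + 1)) :=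
    Finset.range_subset_range.mpr (by omega)
  have hext : ∑ k ∈ Finset.range (n + 1), bc ν k * ee q (n - k)
      = ∑ k ∈ Finset.range (2 * (n / 2 + 1)), bc ν k * ee q (n - k) := by
    refine (Finset.sum_subset hsub fun x hx hx' => ?_)
    rw [Finset.mem_range] at hx hx'
    have hodd : ¬ Even x := by
      rintro ⟨r, hr⟩; omega
    rw [bc, if_neg hodd, zero_mul]
  rw [hext, ← sum_if_even (fun j => bb ν j * ee q (n - 2 * j)) (n / 2 + 1)]
  refine Finset.sum_congr rfl fun k _ => ?_
  by_cases hk : Even k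
  · obtain ⟨r, hr⟩ := hk
    have h2 : k / 2 = r := by omega
    rw [if_pos ⟨r, hr⟩, bc, if_pos ⟨r, hr⟩, h2, show n - 2 * r = n - k by omega]
  · rw [if_neg hk, bc, if_neg hk, zero_mul]

lemma cA_eq (ν q : ℂ) (n : ℕ) :
    cA ν q n = ∑ j ∈ Finset.range (n / 2 + 1), bb ν j * ee q (n - 2 * j) := by
  unfold cA
  rw [← Finset.sum_subset (Finset.range_subset_range.mpr (show n / 2 + 1 ≤ n + 1 by omega))
    (fun x hx hx' => ?_)]
  · refine Finset.sum_congr rfl fun j hj => ?_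
    rw [Finset.mem_range] at hj
    rw [TT_of_le (by omega)]
    ring
  · rw [Finset.mem_range] at hx hx'
    exact TT_of_gt (by omega)

lemma exp_normCoeff {ν : ℂ} (hν : ∀ n : ℕ, 2 * ν + (n : ℂ) + 1 ≠ 0) (q : ℂ) (n : ℕ) :
    normCoeff ν (fun z => Complex.exp (q * z)) n = Complex.Gamma (ν + 1) * cA ν q n := by
  rw [prod_coeff hν _ (ee q) (ee_summable q) (exp_tsum q) n, bc_mul_sum, cA_eq]

lemma ee_zero (q : ℂ) : ee q 0 = 1 := by simp [ee]

lemma ee_one (q : ℂ) : ee q 1 = q := by simp [ee]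

lemma ee_succ (q : ℂ) (t : ℕ) : ee q (t + 1) = q * ee q t / ((t : ℂ) + 1) := by
  unfold ee
  rw [Nat.factorial_succ]
  have h1 : ((t : ℂ) + 1) ≠ 0 := Nat.cast_add_one_ne_zero t
  have h2 : ((Nat.factorial t : ℂ)) ≠ 0 := Nat.cast_ne_zero.mpr (Nat.factorial_ne_zero t)
  push_cast
  field_simp
  ring

lemma ee_mul_succ (q : ℂ) (t : ℕ) : ((t : ℂ) + 1) * ee q (t + 1) = q * ee q t := by
  unfold ee
  rw [Nat.factorial_succ]
  have h1 : ((t : ℂ) + 1) ≠ 0 := Nat.cast_add_one_ne_zero t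
  have h2 : ((Nat.factorial t : ℂ)) ≠ 0 := Nat.cast_ne_zero.mpr (Nat.factorial_ne_zero t)
  push_cast
  field_simp
  ring

lemma cast_add_two_ne (m : ℕ) : ((m : ℂ) + 2) ≠ 0 := by
  intro hc
  apply Nat.cast_add_one_ne_zero (R := ℂ) (m + 1)
  push_cast
  linear_combination hc

lemma TT_rec {ν : ℂ} (hν : ∀ n : ℕ, 2 * ν + (n : ℂ) + 1 ≠ 0) (q : ℂ) (m k : ℕ) :
    ((m : ℂ) + 2) * (2 * ν + (m : ℂ) + 2) * TT ν q (m + 2) k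
      = q * (2 * ν + 2 * (m : ℂ) + 3) * TT ν q (m + 1) k - q ^ 2 * TT ν q m k
        - (if k = 0 then 0 else TT ν q m (k - 1)) := by
  have hm1 : ((m : ℂ) + 1) ≠ 0 := Nat.cast_add_one_ne_zero m
  have hm2 : ((m : ℂ) + 2) ≠ 0 := cast_add_two_ne m
  by_cases hk0 : k = 0
  · subst hk0
    rw [if_pos rfl, TT_of_le (by omega), TT_of_le (by omega), TT_of_le (by omega)]
    simp only [Nat.mul_zero, Nat.sub_zero]
    have he1 := ee_mul_succ q m
    have he2 := ee_mul_succ q (m + 1)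
    push_cast at he2 ⊢
    linear_combination ((2 * ν + (m : ℂ) + 2) * bb ν 0) * he2 + (-(q * bb ν 0)) * he1
  obtain ⟨j, rfl⟩ : ∃ j, k = j + 1 := ⟨k - 1, by omega⟩
  rw [if_neg hk0, Nat.add_sub_cancel]
  have hcases : 2 * (j + 1) ≤ m ∨ 2 * (j + 1) = m + 1 ∨ 2 * (j + 1) = m + 2 ∨ m + 3 ≤ 2 * (j + 1) := by
    omega
  rcases hcases with h | h | h | h
  · obtain ⟨t, rfl⟩ : ∃ t, m = 2 * j + 2 + t := ⟨m - (2 * j + 2), by omega⟩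
    rw [TT_of_le (by omega), TT_of_le (by omega), TT_of_le (by omega), TT_of_le (by omega)]
    rw [show 2 * j + 2 + t + 2 - 2 * (j + 1) = t + 2 by omega,
      show 2 * j + 2 + t + 1 - 2 * (j + 1) = t + 1 by omega,
      show 2 * j + 2 + t - 2 * (j + 1) = t by omega,
      show 2 * j + 2 + t - 2 * j = t + 2 by omega]
    have he1 := ee_mul_succ q t
    have he2 := ee_mul_succ q (t + 1)
    rw [bb_succ hν j]
    push_cast at he2 ⊢
    linear_combination ((2 * ν + 2 * (2 * (j : ℂ) + 2 + (t : ℂ)) + 2 - (t : ℂ)) * bb ν (j + 1)) * he2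
      + (-(q * bb ν (j + 1))) * he1
  · obtain rfl : m = 2 * j + 1 := by omega
    rw [TT_of_le (by omega), TT_of_le (by omega), TT_of_gt (by omega), TT_of_le (by omega)]
    rw [show 2 * j + 1 + 2 - 2 * (j + 1) = 1 by omega,
      show 2 * j + 1 + 1 - 2 * (j + 1) = 0 by omega,
      show 2 * j + 1 - 2 * j = 1 by omega]
    rw [ee_one, ee_zero, bb_succ hν j]
    push_cast
    ring
  · obtain rfl : m = 2 * j := by omega
    rw [TT_of_le (by omega), TT_of_gt (by omega), TT_of_gt (by omega), TT_of_le (by omega)]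
    rw [show 2 * j + 2 - 2 * (j + 1) = 0 by omega, show 2 * j - 2 * j = 0 by omega]
    rw [ee_zero, bb_succ hν j]
    push_cast
    ring
  · rw [TT_of_gt (by omega), TT_of_gt (by omega), TT_of_gt (by omega), TT_of_gt (by omega)]
    ring

lemma cA_rec {ν : ℂ} (hν : ∀ n : ℕ, 2 * ν + (n : ℂ) + 1 ≠ 0) (q : ℂ) (m : ℕ) :
    ((m : ℂ) + 2) * (2 * ν + (m : ℂ) + 2) * cA ν q (m + 2)
      = q * (2 * ν + 2 * (m : ℂ) + 3) * cA ν q (m + 1) - (q ^ 2 + 1) * cA ν q m := by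
  have h2 : ∑ k ∈ Finset.range (m + 3), TT ν q (m + 1) k = cA ν q (m + 1) := by
    rw [show m + 3 = (m + 2) + 1 from rfl, Finset.sum_range_succ, TT_of_gt (by omega), add_zero]
    rfl
  have h3 : ∑ k ∈ Finset.range (m + 3), TT ν q m k = cA ν q m := by
    rw [show m + 3 = (m + 2) + 1 from rfl, Finset.sum_range_succ, TT_of_gt (by omega), add_zero,
      show m + 2 = (m + 1) + 1 from rfl, Finset.sum_range_succ, TT_of_gt (by omega), add_zero]
    rfl
  have h4 : ∑ k ∈ Finset.range (m + 3),
      (if k = 0 then (0 : ℂ) else TT ν q m (k - 1)) = cA ν q m := by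
    rw [show m + 3 = (m + 2) + 1 from rfl,
      Finset.sum_range_succ' (fun k => if k = 0 then (0 : ℂ) else TT ν q m (k - 1)) (m + 2)]
    simp only [Nat.succ_ne_zero, if_false, Nat.add_sub_cancel, if_pos rfl, add_zero]
    rw [show m + 2 = (m + 1) + 1 from rfl, Finset.sum_range_succ, TT_of_gt (by omega), add_zero]
    simp [cA]
  calc ((m : ℂ) + 2) * (2 * ν + (m : ℂ) + 2) * cA ν q (m + 2)
      = ∑ k ∈ Finset.range (m + 3), ((m : ℂ) + 2) * (2 * ν + (m : ℂ) + 2) * TT ν q (m + 2) k := by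
        rw [← Finset.mul_sum]; rfl
    _ = ∑ k ∈ Finset.range (m + 3), (q * (2 * ν + 2 * (m : ℂ) + 3) * TT ν q (m + 1) k
          - q ^ 2 * TT ν q m k - (if k = 0 then 0 else TT ν q m (k - 1))) :=
        Finset.sum_congr rfl fun k _ => TT_rec hν q m k
    _ = q * (2 * ν + 2 * (m : ℂ) + 3) * (∑ k ∈ Finset.range (m + 3), TT ν q (m + 1) k)
          - q ^ 2 * (∑ k ∈ Finset.range (m + 3), TT ν q m k)
          - ∑ k ∈ Finset.range (m + 3), (if k = 0 then (0 : ℂ) else TT ν q m (k - 1)) := by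
        rw [Finset.sum_sub_distrib, Finset.sum_sub_distrib, Finset.mul_sum, Finset.mul_sum]
    _ = q * (2 * ν + 2 * (m : ℂ) + 3) * cA ν q (m + 1) - (q ^ 2 + 1) * cA ν q m := by
        rw [h2, h3, h4]; ring

lemma bb_zero (ν : ℂ) : bb ν 0 = 1 / Complex.Gamma (ν + 1) := by
  unfold bb
  norm_num

lemma cA_zero (ν q : ℂ) : cA ν q 0 = 1 / Complex.Gamma (ν + 1) := by
  unfold cA
  rw [Finset.sum_range_one, TT_of_le (by omega), ← bb_zero]
  simp [ee_zero]

lemma cA_one (ν q : ℂ) : cA ν q 1 = q / Complex.Gamma (ν + 1) := by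
  unfold cA
  rw [Finset.sum_range_succ, Finset.sum_range_one, TT_of_le (by omega), TT_of_gt (by omega),
    add_zero, bb_zero]
  rw [show (1 : ℕ) - 2 * 0 = 1 from rfl, ee_one]
  ring

lemma cosh_normCoeff {ν : ℂ} (hν : ∀ n : ℕ, 2 * ν + (n : ℂ) + 1 ≠ 0) (p : ℂ) (n : ℕ) :
    normCoeff ν (fun z => Complex.cosh (p * z)) n
      = (Complex.Gamma (ν + 1) * cA ν p n + Complex.Gamma (ν + 1) * cA ν (-p) n) / 2 := by
  set a : ℕ → ℂ := fun m => (ee p m + ee (-p) m) / 2 with ha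
  have hasum : ∀ z : ℂ, Summable fun m => ‖a m * z ^ m‖ := by
    intro z
    refine Summable.of_nonneg_of_le (fun m => norm_nonneg _) (fun m => ?_)
      (((ee_summable p z).add (ee_summable (-p) z)).div_const 2)
    rw [show a m * z ^ m = (ee p m * z ^ m + ee (-p) m * z ^ m) / 2 by rw [ha]; ring, norm_div]
    have h2 : ‖(2 : ℂ)‖ = 2 := by norm_num
    rw [h2]
    have := norm_add_le (ee p m * z ^ m) (ee (-p) m * z ^ m)
    linarith
  have hh : ∀ z : ℂ, Complex.cosh (p * z) = ∑' m, a m * z ^ m := by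
    intro z
    have s1 : Summable fun m => ee p m * z ^ m := (ee_summable p z).of_norm
    have s2 : Summable fun m => ee (-p) m * z ^ m := (ee_summable (-p) z).of_norm
    calc Complex.cosh (p * z) = (Complex.exp (p * z) + Complex.exp (-p * z)) / 2 := by
          rw [Complex.cosh]; ring_nf
      _ = ((∑' m, ee p m * z ^ m) + ∑' m, ee (-p) m * z ^ m) / 2 := by
          rw [exp_tsum p z, exp_tsum (-p) z]
      _ = (∑' m, (ee p m * z ^ m + ee (-p) m * z ^ m)) / 2 := by rw [Summable.tsum_add s1 s2]
      _ = ∑' m, a m * z ^ m := by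
          rw [← tsum_div_const]
          exact tsum_congr fun m => by rw [ha]; ring
  rw [prod_coeff hν _ a hasum hh n]
  have : ∑ k ∈ Finset.range (n + 1), bc ν k * a (n - k)
      = ((∑ k ∈ Finset.range (n + 1), bc ν k * ee p (n - k))
        + ∑ k ∈ Finset.range (n + 1), bc ν k * ee (-p) (n - k)) / 2 := by
    rw [← Finset.sum_add_distrib, Finset.sum_div]
    exact Finset.sum_congr rfl fun k _ => by rw [ha]; ring
  rw [this, bc_mul_sum, bc_mul_sum, ← cA_eq, ← cA_eq]
  ring

theorem cosh_besselJ_coeff_recurrence (ν p : ℂ) (hν : ∀ n : ℕ, 2 * ν + (n : ℂ) + 1 ≠ 0)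
    (u : ℕ → ℂ) (hu : ∀ n, u n = normCoeff ν (fun z => Complex.exp (p * z)) n)
    (v : ℕ → ℂ) (hv : ∀ n, v n = normCoeff ν (fun z => Complex.exp (-p * z)) n)
    (w : ℕ → ℂ) (hw : ∀ n, w n = normCoeff ν (fun z => Complex.cosh (p * z)) n) :
    (∀ n : ℕ, w n = (u n + v n) / 2) ∧ u 0 = 1 ∧ u 1 = p ∧ v 0 = 1 ∧ v 1 = -p ∧
    (∀ n : ℕ, 1 ≤ n →
      u (n + 1) = (p * (2 * ν + 2 * ((n : ℂ)) + 1) / ((((n : ℂ)) + 1) * (2 * ν + ((n : ℂ)) + 1))) * u n + (-((p ^ 2 + 1) / ((((n : ℂ)) + 1) * (2 * ν + ((n : ℂ)) + 1)))) * u (n - 1) ∧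
      v (n + 1) = (-(p * (2 * ν + 2 * ((n : ℂ)) + 1)) / ((((n : ℂ)) + 1) * (2 * ν + ((n : ℂ)) + 1))) * v n + (-((p ^ 2 + 1) / ((((n : ℂ)) + 1) * (2 * ν + ((n : ℂ)) + 1)))) * v (n - 1)) := by
  have hΓ : Complex.Gamma (ν + 1) ≠ 0 := by
    have := gamma_ne hν 0
    simpa using this
  have hu' : ∀ n, u n = Complex.Gamma (ν + 1) * cA ν p n :=
    fun n => (hu n).trans (exp_normCoeff hν p n)
  have hv' : ∀ n, v n = Complex.Gamma (ν + 1) * cA ν (-p) n :=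
    fun n => (hv n).trans (exp_normCoeff hν (-p) n)
  refine ⟨fun n => ?_, ?_, ?_, ?_, ?_, fun n hn => ?_⟩
  · rw [hw n, cosh_normCoeff hν p n, hu' n, hv' n]
  · rw [hu' 0, cA_zero, mul_one_div, div_self hΓ]
  · rw [hu' 1, cA_one]; field_simp
  · rw [hv' 0, cA_zero, mul_one_div, div_self hΓ]
  · rw [hv' 1, cA_one]; field_simp
  · obtain ⟨m, rfl⟩ : ∃ m, n = m + 1 := ⟨n - 1, by omega⟩
    have hD1 : ((m : ℂ) + 2) ≠ 0 := cast_add_two_ne m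
    have hD2 : 2 * ν + (m : ℂ) + 2 ≠ 0 := by
      have h := hν (m + 1)
      push_cast at h
      intro hc; exact h (by linear_combination hc)
    have combine : ∀ a b d x y : ℂ, a / d * x + -(b / d) * y = (a * x - b * y) / d := by
      intros; ring
    have hD : (((m + 1 : ℕ) : ℂ) + 1) * (2 * ν + ((m + 1 : ℕ) : ℂ) + 1) ≠ 0 := by
      push_cast
      refine mul_ne_zero (fun hc => hD1 (by linear_combination hc))
        (fun hc => hD2 (by linear_combination hc))
    constructor
    · have key := cA_rec hν p m
      rw [show m + 1 + 1 = m + 2 from rfl, Nat.add_sub_cancel, hu' (m + 2), hu' (m + 1), hu' m,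
        combine, eq_div_iff hD]
      push_cast
      linear_combination Complex.Gamma (ν + 1) * key
    · have key := cA_rec hν (-p) m
      rw [show m + 1 + 1 = m + 2 from rfl, Nat.add_sub_cancel, hv' (m + 2), hv' (m + 1), hv' m,
        combine, eq_div_iff hD]
      push_cast
      linear_combination Complex.Gamma (ν + 1) * key
end
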